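/- arXiv:2111.05175 — 4 statements merged into one kernel-verified Lean document; each statement's English description precedes it below -/
import Mathlib

section
/- Let D > 0, v ∈ ℝ, t > 0, S > 0, z_TX ∈ ℝ, z_S < z_E be real numbers, and let (x_i, y_i) ∈ ℝ² with r_i² = x_i² + y_i². Then the integral of the Gaussian concentration C(x,y,z) = (4πDt)^{-3/2} · exp(-((x - x_i)² + (y - y_i)² + (z - z_TX - v·t)²)/(4Dt)) over the cylinder {(x,y,z) : x² + y² ≤ S², z_S ≤ z ≤ z_E} equals (1/2)·(erf((z_TX + v·t - z_S)/√(4Dt)) - erf((z_TX + v·t - z_E)/√(4Dt))) · exp(-r_i²/(4Dt)) · ∑_{k=0}^∞ (r_i²/(4Dt))^k / (k!)² · γ(k+1, S²/(4Dt)). -/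
/-! The Gaussian factors into an axial and a transverse part. The axial factor integrates over
`[zS, zE]` to a difference of error functions. In polar coordinates `(ρ, θ)` around the axis the
transverse factor is `exp (-(ρ² + r²)/c) * exp ((2ρ/c) (x cos θ + y sin θ))` with `c = 4Dt`;
rotating `θ` and expanding the exponential, only the even powers of `sin` survive integration over
a period, and Wallis' integrals give the angular integral `2π ∑ (ρ r / c)^(2k) / (k!)²`, i.e.
`2π I₀(2ρr/c)`. Integrating this series termwise in `ρ`, the substitution `u = ρ²/c` turns the
`k`-th term into `γ(k + 1, S²/c)`. -/

open MeasureTheory Real Filter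

/-- The Gaussian error function `erf x = (2/√π) ∫₀ˣ exp(-y²) dy`. -/
noncomputable def erf (x : ℝ) : ℝ := (2 / Real.sqrt π) * ∫ y in (0:ℝ)..x, Real.exp (-y^2)

/-- The lower incomplete Gamma function `γ(a, x) = ∫₀ˣ y^(a-1) exp(-y) dy`. -/
noncomputable def lowerGamma (a x : ℝ) : ℝ := ∫ y in (0:ℝ)..x, y^(a-1) * Real.exp (-y)

theorem prod_range_two_mul_add_one_div_two_mul_add_two (k : ℕ) :
    ∏ i ∈ Finset.range k, (2 * (i : ℝ) + 1) / (2 * i + 2) =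
      (2 * k).factorial / (4 ^ k * (k.factorial : ℝ) ^ 2) := by
  induction k with
  | zero => simp
  | succ n ih =>
    rw [Finset.prod_range_succ, ih, show 2 * (n + 1) = 2 * n + 1 + 1 by ring,
      Nat.factorial_succ, Nat.factorial_succ, Nat.factorial_succ]
    push_cast
    field_simp
    ring

theorem integral_sin_pow_neg_pi_pi (n : ℕ) :
    ∫ θ in (-π)..π, sin θ ^ n = (1 + (-1) ^ n) * ∫ θ in 0..π, sin θ ^ n := by
  have hint (a b : ℝ) : IntervalIntegrable (fun θ => sin θ ^ n) volume a b :=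
    (continuous_sin.pow n).intervalIntegrable a b
  have hneg : ∫ θ in (-π)..0, sin θ ^ n = (-1) ^ n * ∫ θ in 0..π, sin θ ^ n := by
    have hsym (θ : ℝ) : sin (-θ) ^ n = (-1) ^ n * sin θ ^ n := by rw [sin_neg, neg_pow]
    rw [← intervalIntegral.integral_const_mul, ← neg_zero, ← intervalIntegral.integral_comp_neg]
    simp only [hsym, neg_zero]
  rw [← intervalIntegral.integral_add_adjacent_intervals (hint _ 0) (hint 0 _), hneg]
  ring

theorem summable_pow_div_factorial_sq (x : ℝ) :
    Summable fun k : ℕ => x ^ k / (k.factorial : ℝ) ^ 2 := by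
  refine .of_norm_bounded (Real.summable_pow_div_factorial |x|) fun k => ?_
  have hk : (1 : ℝ) ≤ k.factorial := by exact_mod_cast k.factorial_pos
  rw [norm_div, norm_pow, Real.norm_eq_abs, norm_pow, Real.norm_natCast, sq]
  exact div_le_div_of_nonneg_left (by positivity) (by positivity) (le_mul_of_one_le_left
    (by positivity) hk)

theorem intervalIntegral_tsum_of_norm_le {ι E : Type*} [Countable ι] [NormedAddCommGroup E]
    [NormedSpace ℝ E] {f : ι → ℝ → E} {M : ι → ℝ} {a b : ℝ} (hf : ∀ i, Continuous (f i))
    (hM : Summable M) (hfM : ∀ i, ∀ x ∈ Set.uIcc a b, ‖f i x‖ ≤ M i) :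
    ∫ x in a..b, ∑' i, f i x = ∑' i, ∫ x in a..b, f i x := by
  let F : ι → C(ℝ, E) := fun i => ⟨f i, hf i⟩
  refine (intervalIntegral.tsum_intervalIntegral_eq_of_summable_norm (f := F) ?_).symm
  refine hM.of_nonneg_of_le (fun _ => norm_nonneg _) fun i => ?_
  exact (ContinuousMap.norm_le _ ((norm_nonneg _).trans (hfM i a Set.left_mem_uIcc))).2
    fun x => hfM i x x.2

theorem integral_exp_mul_sin (R : ℝ) :
    ∫ θ in (-π)..π, exp (R * sin θ) =
      2 * π * ∑' k : ℕ, (R ^ 2 / 4) ^ k / (k.factorial : ℝ) ^ 2 := by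
  have hbound (n : ℕ) (θ : ℝ) (_ : θ ∈ Set.uIcc (-π) π) :
      ‖(R * sin θ) ^ n / n.factorial‖ ≤ |R| ^ n / n.factorial := by
    rw [norm_div, norm_pow, Real.norm_natCast, Real.norm_eq_abs, abs_mul]
    gcongr
    exact mul_le_of_le_one_right (abs_nonneg R) (abs_sin_le_one θ)
  simp_rw [exp_eq_exp_ℝ, NormedSpace.exp_eq_tsum_div]
  rw [intervalIntegral_tsum_of_norm_le (fun n => by fun_prop)
    (Real.summable_pow_div_factorial |R|) hbound]
  set g : ℕ → ℝ := fun n => ∫ θ in (-π)..π, (R * sin θ) ^ n / n.factorial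
  have hg (n : ℕ) : g n = R ^ n / n.factorial * ((1 + (-1) ^ n) * ∫ θ in 0..π, sin θ ^ n) := by
    rw [← integral_sin_pow_neg_pi_pi, ← intervalIntegral.integral_const_mul]
    refine intervalIntegral.integral_congr fun θ _ => ?_
    ring
  have hodd (k : ℕ) : g (2 * k + 1) = 0 := by simp [hg, pow_succ, pow_mul]
  have heven (k : ℕ) : g (2 * k) = 2 * π * ((R ^ 2 / 4) ^ k / (k.factorial : ℝ) ^ 2) := by
    rw [hg, integral_sin_pow_even, prod_range_two_mul_add_one_div_two_mul_add_two, pow_mul,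
      pow_mul, div_pow]
    field_simp
    norm_num
  have hsum_even : Summable fun k => g (2 * k) := by
    simp_rw [heven]; exact (summable_pow_div_factorial_sq _).mul_left _
  have hsum_odd : Summable fun k => g (2 * k + 1) := by
    simp_rw [hodd]; exact summable_zero
  rw [← tsum_even_add_odd hsum_even hsum_odd]
  simp_rw [hodd, heven, tsum_zero, add_zero, tsum_mul_left]

theorem integral_exp_mul_cos_add_mul_sin (A B : ℝ) :
    ∫ θ in (-π)..π, exp (A * cos θ + B * sin θ) =
      2 * π * ∑' k : ℕ, ((A ^ 2 + B ^ 2) / 4) ^ k / (k.factorial : ℝ) ^ 2 := by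
  set z : ℂ := ⟨B, A⟩
  have hA : A = ‖z‖ * sin z.arg := (Complex.norm_mul_sin_arg z).symm
  have hB : B = ‖z‖ * cos z.arg := (Complex.norm_mul_cos_arg z).symm
  have hrot (θ : ℝ) : A * cos θ + B * sin θ = ‖z‖ * sin (θ + z.arg) := by
    rw [sin_add]
    linear_combination cos θ * hA + sin θ * hB
  have hper : Function.Periodic (fun θ => exp (‖z‖ * sin θ)) (2 * π) := fun θ => by
    simp only [sin_add_two_pi]
  have hnorm : ‖z‖ ^ 2 = A ^ 2 + B ^ 2 := by
    rw [Complex.sq_norm, Complex.normSq_mk]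
    ring
  simp_rw [hrot]
  rw [intervalIntegral.integral_comp_add_right (fun θ => exp (‖z‖ * sin θ)), ← hnorm,
    ← integral_exp_mul_sin]
  convert hper.intervalIntegral_add_eq (-π + z.arg) (-π) using 2 <;> ring

theorem setIntegral_closedDisk_eq_polar {E : Type*} [NormedAddCommGroup E] [NormedSpace ℝ E]
    {f : ℝ × ℝ → E} (hf : Continuous f) {S : ℝ} (hS : 0 ≤ S) :
    ∫ q in {q : ℝ × ℝ | q.1 ^ 2 + q.2 ^ 2 ≤ S ^ 2}, f q =
      ∫ ρ in 0..S, ρ • ∫ θ in (-π)..π, f (ρ * cos θ, ρ * sin θ) := by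
  set g : ℝ × ℝ → E := fun p => p.1 • f (p.1 * cos p.2, p.1 * sin p.2)
  have hdisk : MeasurableSet {q : ℝ × ℝ | q.1 ^ 2 + q.2 ^ 2 ≤ S ^ 2} :=
    measurableSet_le (by fun_prop) (by fun_prop)
  have hpolar : ∀ p ∈ polarCoord.target,
      p.1 • Set.indicator {q : ℝ × ℝ | q.1 ^ 2 + q.2 ^ 2 ≤ S ^ 2} f (polarCoord.symm p) =
        Set.indicator {p : ℝ × ℝ | p.1 ≤ S} g p := by
    rintro ⟨ρ, θ⟩ ⟨hρ, -⟩
    change ρ • Set.indicator _ f (ρ * cos θ, ρ * sin θ) = _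
    have hρS : (ρ * cos θ) ^ 2 + (ρ * sin θ) ^ 2 ≤ S ^ 2 ↔ ρ ≤ S := by
      rw [show (ρ * cos θ) ^ 2 + (ρ * sin θ) ^ 2 = ρ ^ 2 by
        linear_combination ρ ^ 2 * cos_sq_add_sin_sq θ]
      exact pow_le_pow_iff_left₀ (le_of_lt hρ) hS two_ne_zero
    simp only [Set.indicator_apply, Set.mem_ofPred_eq, hρS]
    split_ifs <;> simp [g]
  have htarget : polarCoord.target ∩ {p : ℝ × ℝ | p.1 ≤ S} = Set.Ioc 0 S ×ˢ Set.Ioo (-π) π := by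
    ext ⟨ρ, θ⟩
    simp only [polarCoord_target, Set.mem_inter_iff, Set.mem_prod, Set.mem_Ioi, Set.mem_Ioo,
      Set.mem_Ioc]
    tauto
  have hg : IntegrableOn g (Set.Ioc 0 S ×ˢ Set.Ioo (-π) π) (volume.prod volume) :=
    ((Continuous.continuousOn (by fun_prop)).integrableOn_compact
      (isCompact_Icc.prod isCompact_Icc)).mono_set
      (Set.prod_mono Set.Ioc_subset_Icc_self Set.Ioo_subset_Icc_self)
  rw [← integral_indicator hdisk, ← integral_comp_polarCoord_symm,
    setIntegral_congr_fun polarCoord.open_target.measurableSet hpolar,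
    setIntegral_indicator (measurableSet_le (by fun_prop) (by fun_prop)), htarget,
    Measure.volume_eq_prod, setIntegral_prod g hg, intervalIntegral.integral_of_le hS]
  refine setIntegral_congr_fun measurableSet_Ioc fun ρ _ => ?_
  rw [intervalIntegral.integral_of_le (by linarith [pi_pos]), integral_Ioc_eq_integral_Ioo,
    integral_smul]

theorem integral_pow_mul_exp_neg_sq_div (k : ℕ) {c : ℝ} (hc : 0 < c) (S : ℝ) :
    ∫ ρ in 0..S, ρ ^ (2 * k + 1) * exp (-(ρ ^ 2 / c)) =
      c ^ (k + 1) / 2 * lowerGamma (k + 1) (S ^ 2 / c) := by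
  have hsubst := intervalIntegral.integral_deriv_smul_comp (a := 0) (b := S)
    (f := fun ρ => ρ ^ 2 / c) (f' := fun ρ => 2 * ρ / c) (g := fun u => u ^ k * exp (-u))
    (fun x _ => by simpa using (hasDerivAt_pow 2 x).div_const c) (by fun_prop) (by fun_prop)
  simp only [Function.comp, smul_eq_mul, zero_pow two_ne_zero, zero_div] at hsubst
  have hlower : lowerGamma (k + 1) (S ^ 2 / c) = ∫ u in 0..S ^ 2 / c, u ^ k * exp (-u) := by
    simp only [lowerGamma, add_sub_cancel_right, rpow_natCast]
  rw [hlower, ← hsubst, ← intervalIntegral.integral_const_mul]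
  refine intervalIntegral.integral_congr fun ρ _ => ?_
  simp only [div_pow]
  field_simp
  ring

theorem setIntegral_closedDisk_exp_neg_sq_dist {c S : ℝ} (hc : 0 < c) (hS : 0 ≤ S) (x y : ℝ) :
    ∫ q in {q : ℝ × ℝ | q.1 ^ 2 + q.2 ^ 2 ≤ S ^ 2}, exp (-(((q.1 - x) ^ 2 + (q.2 - y) ^ 2) / c)) =
      π * c * exp (-((x ^ 2 + y ^ 2) / c)) * ∑' k : ℕ, ((x ^ 2 + y ^ 2) / c) ^ k /
        (k.factorial : ℝ) ^ 2 * lowerGamma (k + 1) (S ^ 2 / c) := by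
  set r2 := x ^ 2 + y ^ 2
  set a : ℕ → ℝ := fun k => 2 * π * exp (-(r2 / c)) * ((r2 / c ^ 2) ^ k / (k.factorial : ℝ) ^ 2)
  have ha (k : ℕ) : 0 ≤ a k := by positivity
  have hangular (ρ : ℝ) :
      ρ • ∫ θ in (-π)..π, exp (-(((ρ * cos θ - x) ^ 2 + (ρ * sin θ - y) ^ 2) / c)) =
        ∑' k, a k * (ρ ^ (2 * k + 1) * exp (-(ρ ^ 2 / c))) := by
    have hsplit (θ : ℝ) : exp (-(((ρ * cos θ - x) ^ 2 + (ρ * sin θ - y) ^ 2) / c)) =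
        exp (-(ρ ^ 2 / c)) * exp (-(r2 / c)) *
          exp (2 * ρ * x / c * cos θ + 2 * ρ * y / c * sin θ) := by
      rw [← exp_add, ← exp_add]
      congr 1
      field_simp
      linear_combination -ρ ^ 2 * cos_sq_add_sin_sq θ
    have hcoeff : ((2 * ρ * x / c) ^ 2 + (2 * ρ * y / c) ^ 2) / 4 = ρ ^ 2 * (r2 / c ^ 2) := by
      ring
    simp_rw [hsplit, intervalIntegral.integral_const_mul, integral_exp_mul_cos_add_mul_sin, hcoeff,
      smul_eq_mul, ← tsum_mul_left]
    congr 1 with k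
    simp only [a, mul_pow, pow_succ, pow_mul]
    ring
  have hbound (k : ℕ) (ρ : ℝ) (hρ : ρ ∈ Set.uIcc 0 S) :
      ‖a k * (ρ ^ (2 * k + 1) * exp (-(ρ ^ 2 / c)))‖ ≤ a k * S ^ (2 * k + 1) := by
    rw [Set.uIcc_of_le hS] at hρ
    rw [norm_mul, Real.norm_of_nonneg (ha k), norm_mul, Real.norm_of_nonneg (pow_nonneg hρ.1 _),
      Real.norm_of_nonneg (exp_nonneg _)]
    gcongr
    calc ρ ^ (2 * k + 1) * exp (-(ρ ^ 2 / c)) ≤ ρ ^ (2 * k + 1) * 1 := by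
          gcongr
          · exact pow_nonneg hρ.1 _
          · exact exp_le_one_iff.2 (neg_nonpos.2 (by positivity))
      _ ≤ S ^ (2 * k + 1) := by rw [mul_one]; exact pow_le_pow_left₀ hρ.1 hρ.2 _
  have hsummable : Summable fun k => a k * S ^ (2 * k + 1) := by
    refine ((summable_pow_div_factorial_sq (r2 * S ^ 2 / c ^ 2)).mul_left
      (2 * π * exp (-(r2 / c)) * S)).congr fun k => ?_
    simp only [a, div_pow, mul_pow, pow_succ, pow_mul]
    ring
  rw [setIntegral_closedDisk_eq_polar (by fun_prop) hS]
  simp_rw [hangular]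
  rw [intervalIntegral_tsum_of_norm_le (fun k => by fun_prop) hsummable hbound, ← tsum_mul_left]
  congr 1 with k
  rw [intervalIntegral.integral_const_mul, integral_pow_mul_exp_neg_sq_div k hc]
  simp only [a, div_pow]
  field_simp
  ring

theorem integral_exp_neg_sq_div_eq_erf {c : ℝ} (hc : 0 < c) (μ a b : ℝ) :
    ∫ z in a..b, exp (-((z - μ) ^ 2 / c)) =
      √c * √π / 2 * (erf ((μ - a) / √c) - erf ((μ - b) / √c)) := by
  have hsq (z : ℝ) : (z - μ) ^ 2 / c = ((μ - z) / √c) ^ 2 := by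
    rw [div_pow, sq_sqrt hc.le]
    ring
  simp_rw [hsq]
  rw [intervalIntegral.integral_comp_sub_left (fun w => exp (-(w / √c) ^ 2)) μ,
    intervalIntegral.integral_comp_div (fun u => exp (-u ^ 2)) (sqrt_pos.2 hc).ne',
    ← intervalIntegral.integral_interval_sub_left (a := 0)
      (Continuous.intervalIntegrable (by fun_prop) _ _)
      (Continuous.intervalIntegrable (by fun_prop) _ _)]
  simp only [erf, smul_eq_mul]
  field_simp

theorem setIntegral_prodAssoc_mul {α β γ L : Type*} [RCLike L] [MeasureSpace α] [MeasureSpace β]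
    [MeasureSpace γ] [SFinite (volume : Measure α)] [SFinite (volume : Measure β)]
    [SFinite (volume : Measure γ)] (f : α × β → L) (g : γ → L) (s : Set (α × β)) (t : Set γ) :
    ∫ p in {p : α × β × γ | (p.1, p.2.1) ∈ s ∧ p.2.2 ∈ t}, f (p.1, p.2.1) * g p.2.2 =
      (∫ q in s, f q) * ∫ z in t, g z := by
  rw [← setIntegral_prod_mul, ← Measure.volume_eq_prod,
    ← volume_preserving_prodAssoc.symm.setIntegral_preimage_emb
      MeasurableEquiv.prodAssoc.symm.measurableEmbedding]
  rfl

/-- Proposition 1 of the paper: the channel impulse response of a cylindrical transparent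
receiver for a point release at `(xi, yi, zTX)` with diffusion `D` and drift `v`. -/
theorem cylinder_integral_gaussian (D v t S zTX zS zE xi yi : ℝ)
    (hD : 0 < D) (ht : 0 < t) (hS : 0 < S) (hz : zS < zE) :
    (∫ p in {p : ℝ × ℝ × ℝ | p.1^2 + p.2.1^2 ≤ S^2 ∧ p.2.2 ∈ Set.Icc zS zE},
        (4*π*D*t) ^ (-(3:ℝ)/2) *
          Real.exp (-(((p.1 - xi)^2 + (p.2.1 - yi)^2 + (p.2.2 - zTX - v*t)^2) / (4*D*t)))) =
      (1/2) * (erf ((zTX + v*t - zS) / Real.sqrt (4*D*t))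
              - erf ((zTX + v*t - zE) / Real.sqrt (4*D*t)))
        * Real.exp (-((xi^2 + yi^2) / (4*D*t)))
        * ∑' k : ℕ, ((xi^2 + yi^2) / (4*D*t))^k / ((Nat.factorial k : ℝ))^2
            * lowerGamma (k+1) (S^2 / (4*D*t)) := by
  set c := 4 * D * t
  have hc : 0 < c := by positivity
  have hπc : 0 < π * c := by positivity
  have hsplit (p : ℝ × ℝ × ℝ) :
      (4 * π * D * t) ^ (-(3:ℝ) / 2) *
          exp (-(((p.1 - xi) ^ 2 + (p.2.1 - yi) ^ 2 + (p.2.2 - zTX - v * t) ^ 2) / c)) =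
        (π * c) ^ (-(3:ℝ) / 2) * (exp (-(((p.1 - xi) ^ 2 + (p.2.1 - yi) ^ 2) / c)) *
          exp (-((p.2.2 - (zTX + v * t)) ^ 2 / c))) := by
    rw [← exp_add, show 4 * π * D * t = π * c by ring]
    congr 3
    ring
  have hnormalize : (π * c) ^ (-(3:ℝ) / 2) * (π * c * (√c * √π)) = 1 := by
    rw [← sqrt_mul hc.le, mul_comm c π, sqrt_eq_rpow, ← rpow_one_add' hπc.le (by norm_num),
      ← rpow_add hπc]
    norm_num
  simp_rw [hsplit]
  have hfactor := setIntegral_prodAssoc_mul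
    (fun q => exp (-(((q.1 - xi) ^ 2 + (q.2 - yi) ^ 2) / c)))
    (fun z => exp (-((z - (zTX + v * t)) ^ 2 / c))) {q | q.1 ^ 2 + q.2 ^ 2 ≤ S ^ 2} (Set.Icc zS zE)
  simp only [Set.mem_ofPred_eq] at hfactor
  rw [integral_const_mul, hfactor, setIntegral_closedDisk_exp_neg_sq_dist hc hS.le,
    integral_Icc_eq_integral_Ioc, ← intervalIntegral.integral_of_le hz.le, integral_exp_neg_sq_div_eq_erf hc]
  linear_combination (erf ((zTX + v * t - zS) / √c) - erf ((zTX + v * t - zE) / √c)) / 2 *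
    exp (-((xi ^ 2 + yi ^ 2) / c)) * (∑' k : ℕ, ((xi ^ 2 + yi ^ 2) / c) ^ k /
      (k.factorial : ℝ) ^ 2 * lowerGamma (k + 1) (S ^ 2 / c)) * hnormalize
end

section
/- Let L and P be nonempty finite index sets, and let f_l : ℕ → ℝ for l ∈ L and g_p : ℕ → ℝ for p ∈ P be families of functions with f_l(r) > 0 and g_p(r) > 0 for all r and all l, p. If for every l ∈ L and every p ∈ P the function r ↦ f_l(r)/g_p(r) is monotonically increasing, then the function r ↦ (∑_{l ∈ L} f_l(r)) / (∑_{p ∈ P} g_p(r)) is monotonically increasing. -/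
/-- Lemma 1 of the paper: if every ratio `f l / g p` of the positive functions is
monotonically increasing, then so is the ratio of the sums `(∑ l, f l) / (∑ p, g p)`. -/
theorem monotone_sum_div_sum {L P : Type*} [Fintype L] [Fintype P]
    [Nonempty L] [Nonempty P]
    (f : L → ℕ → ℝ) (g : P → ℕ → ℝ)
    (hf : ∀ l r, 0 < f l r) (hg : ∀ p r, 0 < g p r)
    (hmono : ∀ l p, Monotone (fun r => f l r / g p r)) :
    Monotone (fun r => (∑ l, f l r) / (∑ p, g p r)) := by
  intro r s hrs
  have hgr : 0 < ∑ p, g p r := Finset.sum_pos (fun p _ => hg p r) Finset.univ_nonempty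
  have hgs : 0 < ∑ p, g p s := Finset.sum_pos (fun p _ => hg p s) Finset.univ_nonempty
  rw [div_le_div_iff₀ hgr hgs]
  rw [Finset.sum_mul_sum, Finset.sum_mul_sum]
  apply Finset.sum_le_sum
  intro l _
  apply Finset.sum_le_sum
  intro p _
  have h := hmono l p hrs
  simp only at h
  rw [div_le_div_iff₀ (hg p r) (hg p s)] at h
  linarith
end

section
/- Let N ≥ 1 and μ₁, …, μ_N ≥ 0, λ_s > 0, λ_n > 0 be real numbers with λ_s > ∑_{i=1}^N μ_i. For r ∈ ℕ define F(r) = ∑_{s ∈ {0,1}^N} (λ_s + ∑_i s_i μ_i + λ_n)^r · exp(-(λ_s + ∑_i s_i μ_i + λ_n)) and G(r) = ∑_{s ∈ {0,1}^N} (∑_i s_i μ_i + λ_n)^r · exp(-(∑_i s_i μ_i + λ_n)). Then the function r ↦ F(r)/G(r) is monotonically increasing on ℕ. -/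
open Real

/-!
Both `F` and `G` are positive combinations of powers `x ^ r`, and the worst-case SINR condition
puts every base of `F` (at least `λ_s + λ_n`) above every base of `G` (less than `λ_s + λ_n`).
Expanding `F r * G (r + 1) ≤ F (r + 1) * G r` into a double sum, each cross term
`a ^ r * b ^ r * (w * v)` is multiplied by `b` on the left and by `a ≥ b` on the right.
-/

theorem monotone_sum_pow_mul_div_sum_pow_mul {ι κ : Type*} [Fintype ι] [Fintype κ]
    [Nonempty κ] (a w : ι → ℝ) (b v : κ → ℝ) (hw : ∀ i, 0 ≤ w i) (hv : ∀ k, 0 < v k)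
    (hb : ∀ k, 0 < b k) (hba : ∀ i k, b k ≤ a i) :
    Monotone (fun r : ℕ => (∑ i, a i ^ r * w i) / ∑ k, b k ^ r * v k) := by
  have hG : ∀ r : ℕ, 0 < ∑ k, b k ^ r * v k := fun r =>
    Finset.sum_pos (fun k _ => mul_pos (pow_pos (hb k) r) (hv k)) Finset.univ_nonempty
  refine monotone_nat_of_le_succ fun r => ?_
  rw [div_le_div_iff₀ (hG r) (hG (r + 1)), Finset.sum_mul_sum, Finset.sum_mul_sum]
  refine Finset.sum_le_sum fun i _ => Finset.sum_le_sum fun k _ => ?_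
  have ha : 0 ≤ a i := (hb k).le.trans (hba i k)
  have hterm : 0 ≤ a i ^ r * b k ^ r * (w i * v k) := by
    have := hv k; have := hw i; have := hb k; positivity
  calc a i ^ r * w i * (b k ^ (r + 1) * v k)
      = a i ^ r * b k ^ r * (w i * v k) * b k := by ring
    _ ≤ a i ^ r * b k ^ r * (w i * v k) * a i := mul_le_mul_of_nonneg_left (hba i k) hterm
    _ = a i ^ (r + 1) * w i * (b k ^ r * v k) := by ring

theorem ml_metric_monotone_general (N : ℕ) (μ : Fin N → ℝ) (hμ : ∀ i, 0 ≤ μ i)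
    (lams lamn : ℝ) (hlamn : 0 < lamn)
    (hSINR : ∑ i, μ i < lams) :
    Monotone (fun r : ℕ =>
      (∑ s : Fin N → Bool,
          (lams + (∑ i, if s i then μ i else 0) + lamn)^r *
            Real.exp (-(lams + (∑ i, if s i then μ i else 0) + lamn))) /
      (∑ s : Fin N → Bool,
          ((∑ i, if s i then μ i else 0) + lamn)^r *
            Real.exp (-((∑ i, if s i then μ i else 0) + lamn)))) := by
  set M : (Fin N → Bool) → ℝ := fun s => ∑ i, if s i then μ i else 0
  have hM_nonneg : ∀ s, 0 ≤ M s := fun s =>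
    Finset.sum_nonneg fun i _ => by split_ifs <;> simp [hμ i]
  have hM_le : ∀ s, M s ≤ ∑ i, μ i := fun s =>
    Finset.sum_le_sum fun i _ => by split_ifs <;> simp [hμ i]
  exact monotone_sum_pow_mul_div_sum_pow_mul (fun s => lams + M s + lamn)
    (fun s => exp (-(lams + M s + lamn))) (fun s => M s + lamn) (fun s => exp (-(M s + lamn)))
    (fun _ => (exp_pos _).le) (fun _ => exp_pos _)
    (fun s => by linarith [hM_nonneg s])
    (fun s t => by linarith [hM_nonneg s, hM_le t])

/-- Under the worst-case SINR condition `λ_s > ∑ i, μ i`, the maximum-likelihood decision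
metric `F(r)/G(r)` — a ratio of sums of Poisson likelihoods over all interferer activity
patterns `s ∈ {0,1}^N` — is monotonically increasing in the molecule count `r`. -/
theorem ml_metric_monotone (N : ℕ) (hN : 1 ≤ N) (μ : Fin N → ℝ) (hμ : ∀ i, 0 ≤ μ i)
    (lams lamn : ℝ) (hlams : 0 < lams) (hlamn : 0 < lamn)
    (hSINR : ∑ i, μ i < lams) :
    Monotone (fun r : ℕ =>
      (∑ s : Fin N → Bool,
          (lams + (∑ i, if s i then μ i else 0) + lamn)^r *
            Real.exp (-(lams + (∑ i, if s i then μ i else 0) + lamn))) /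
      (∑ s : Fin N → Bool,
          ((∑ i, if s i then μ i else 0) + lamn)^r *
            Real.exp (-((∑ i, if s i then μ i else 0) + lamn)))) :=
  ml_metric_monotone_general N μ hμ lams lamn hlamn hSINR
end

section
/- Let N ≥ 1 and μ₁, …, μ_N ≥ 0, λ_s > 0, λ_n > 0 be real numbers with λ_s > ∑_{i=1}^N μ_i. For r ∈ ℕ define F(r) = ∑_{s ∈ {0,1}^N} (λ_s + ∑_i s_i μ_i + λ_n)^r · exp(-(λ_s + ∑_i s_i μ_i + λ_n)) and G(r) = ∑_{s ∈ {0,1}^N} (∑_i s_i μ_i + λ_n)^r · exp(-(∑_i s_i μ_i + λ_n)). Then the set T = {r ∈ ℕ : F(r) ≥ G(r)} is nonempty, and with Θ = min T one has T = {r ∈ ℕ : r ≥ Θ}; i.e., for all r ∈ ℕ, F(r) ≥ G(r) if and only if r ≥ Θ. -/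
open Real

/-- Auxiliary: mixture with all parameters below `c` shrinks relative to `c` each step. -/
lemma mix_step_upper {ι : Type*} [Fintype ι] (b : ι → ℝ) (c : ℝ)
    (hb : ∀ s, 0 ≤ b s) (hbc : ∀ s, b s ≤ c) (r : ℕ) :
    ∑ s, (b s)^(r+1) * Real.exp (-(b s)) ≤ c * ∑ s, (b s)^r * Real.exp (-(b s)) := by
  rw [Finset.mul_sum]
  apply Finset.sum_le_sum
  intro s _
  have h1 : (b s)^(r+1) * Real.exp (-(b s)) = b s * ((b s)^r * Real.exp (-(b s))) := by ring
  rw [h1]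
  exact mul_le_mul_of_nonneg_right (hbc s)
    (mul_nonneg (pow_nonneg (hb s) r) (Real.exp_pos _).le)

/-- Auxiliary: mixture with all parameters above `c ≥ 0` grows relative to `c` each step. -/
lemma mix_step_lower {ι : Type*} [Fintype ι] (a : ι → ℝ) (c : ℝ)
    (hc : 0 ≤ c) (hca : ∀ s, c ≤ a s) (r : ℕ) :
    c * ∑ s, (a s)^r * Real.exp (-(a s)) ≤ ∑ s, (a s)^(r+1) * Real.exp (-(a s)) := by
  rw [Finset.mul_sum]
  apply Finset.sum_le_sum
  intro s _
  have h1 : (a s)^(r+1) * Real.exp (-(a s)) = a s * ((a s)^r * Real.exp (-(a s))) := by ring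
  rw [h1]
  have ha : 0 ≤ a s := le_trans hc (hca s)
  exact mul_le_mul_of_nonneg_right (hca s) (by positivity)

/-- Corollary 1 of the paper: under the worst-case SINR condition `λ_s > ∑ i, μ i`, the set
`T = {r : F r ≥ G r}` of counts for which the ML likelihood ratio is at least one is
nonempty, and with `Θ = min T` one has `F r ≥ G r ↔ r ≥ Θ`; i.e., the ML detector is a
single-threshold detector. -/
theorem ml_single_threshold (N : ℕ) (hN : 1 ≤ N) (μ : Fin N → ℝ) (hμ : ∀ i, 0 ≤ μ i)
    (lams lamn : ℝ) (hlams : 0 < lams) (hlamn : 0 < lamn)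
    (hSINR : ∑ i, μ i < lams)
    (F G : ℕ → ℝ)
    (hF : ∀ r : ℕ, F r = ∑ s : Fin N → Bool,
        (lams + (∑ i, if s i then μ i else 0) + lamn)^r *
          Real.exp (-(lams + (∑ i, if s i then μ i else 0) + lamn)))
    (hG : ∀ r : ℕ, G r = ∑ s : Fin N → Bool,
        ((∑ i, if s i then μ i else 0) + lamn)^r *
          Real.exp (-((∑ i, if s i then μ i else 0) + lamn))) :
    {r : ℕ | G r ≤ F r}.Nonempty ∧
      ∀ r : ℕ, G r ≤ F r ↔ sInf {r : ℕ | G r ≤ F r} ≤ r := by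
  set m : (Fin N → Bool) → ℝ := fun s => ∑ i, if s i then μ i else 0 with hmdef
  have hm0 : ∀ s, 0 ≤ m s := fun s =>
    Finset.sum_nonneg fun i _ => by split <;> [exact hμ i; exact le_rfl]
  have hmle : ∀ s, m s ≤ ∑ i, μ i := fun s =>
    Finset.sum_le_sum fun i _ => by split <;> [exact le_rfl; exact hμ i]
  have hsum0 : 0 ≤ ∑ i, μ i := Finset.sum_nonneg fun i _ => hμ i
  set c := lams + lamn with hc
  set d := (∑ i, μ i) + lamn with hd
  have hd0 : 0 < d := by positivity
  have hdc : d < c := by simp only [hc, hd]; linarith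
  have hc0 : 0 < c := lt_trans hd0 hdc
  set M := lams + d with hM
  -- bounds on parameters
  have hbpos : ∀ s, 0 ≤ m s + lamn := fun s => by linarith [hm0 s]
  have hbd : ∀ s, m s + lamn ≤ d := fun s => by simp only [hd]; linarith [hmle s]
  have hca : ∀ s, c ≤ lams + m s + lamn := fun s => by simp only [hc]; linarith [hm0 s]
  have haM : ∀ s, lams + m s + lamn ≤ M := fun s => by
    simp only [hM, hd]; linarith [hmle s]
  -- step: T is upward closed
  have step : ∀ r : ℕ, G r ≤ F r → G (r+1) ≤ F (r+1) := by
    intro r h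
    have h1 : G (r+1) ≤ c * G r := by
      rw [hG, hG]
      exact mix_step_upper (fun s => m s + lamn) c hbpos
        (fun s => le_of_lt (lt_of_le_of_lt (hbd s) hdc)) r
    have h2 : c * F r ≤ F (r+1) := by
      rw [hF, hF]
      exact mix_step_lower (fun s => lams + m s + lamn) c (le_of_lt hc0) hca r
    calc G (r+1) ≤ c * G r := h1
      _ ≤ c * F r := by exact mul_le_mul_of_nonneg_left h (le_of_lt hc0)
      _ ≤ F (r+1) := h2
  -- nonemptiness
  have hne : {r : ℕ | G r ≤ F r}.Nonempty := by
    obtain ⟨n, hn⟩ := pow_unbounded_of_one_lt (Real.exp (M - lamn))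
      ((one_lt_div hd0).mpr hdc)
    refine ⟨n, ?_⟩
    have key : d ^ n * Real.exp (-lamn) ≤ c ^ n * Real.exp (-M) := by
      rw [div_pow] at hn
      have h1 : Real.exp (M - lamn) * d ^ n < c ^ n := by
        rw [lt_div_iff₀ (by positivity)] at hn
        linarith [hn]
      have h2 := mul_le_mul_of_nonneg_right (le_of_lt h1) (Real.exp_pos (-M)).le
      calc d ^ n * Real.exp (-lamn)
          = Real.exp (M - lamn) * d ^ n * Real.exp (-M) := by
            rw [mul_comm (Real.exp (M - lamn)) (d ^ n), mul_assoc, ← Real.exp_add]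
            ring_nf
        _ ≤ c ^ n * Real.exp (-M) := h2
    have hGle : G n ≤ (Fintype.card (Fin N → Bool)) * (d ^ n * Real.exp (-lamn)) := by
      rw [hG]
      calc (∑ s : Fin N → Bool, (m s + lamn)^n * Real.exp (-(m s + lamn)))
          ≤ ∑ _s : Fin N → Bool, d ^ n * Real.exp (-lamn) := by
            apply Finset.sum_le_sum
            intro s _
            apply mul_le_mul
            · exact pow_le_pow_left₀ (hbpos s) (hbd s) n
            · exact Real.exp_le_exp.mpr (by linarith [hm0 s])
            · positivity
            · positivity
        _ = (Fintype.card (Fin N → Bool)) * (d ^ n * Real.exp (-lamn)) := by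
            rw [Finset.sum_const, Finset.card_univ, nsmul_eq_mul]
    have hFge : (Fintype.card (Fin N → Bool)) * (c ^ n * Real.exp (-M)) ≤ F n := by
      rw [hF]
      calc ((Fintype.card (Fin N → Bool)) : ℝ) * (c ^ n * Real.exp (-M))
          = ∑ _s : Fin N → Bool, c ^ n * Real.exp (-M) := by
            rw [Finset.sum_const, Finset.card_univ, nsmul_eq_mul]
        _ ≤ ∑ s : Fin N → Bool, (lams + m s + lamn)^n * Real.exp (-(lams + m s + lamn)) := by
            apply Finset.sum_le_sum
            intro s _
            apply mul_le_mul
            · exact pow_le_pow_left₀ (le_of_lt hc0) (hca s) n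
            · exact Real.exp_le_exp.mpr (by linarith [haM s])
            · exact (Real.exp_pos _).le
            · exact pow_nonneg (by linarith [hm0 s]) n
    have hcard : (0:ℝ) ≤ (Fintype.card (Fin N → Bool)) := by positivity
    calc G n ≤ (Fintype.card (Fin N → Bool)) * (d ^ n * Real.exp (-lamn)) := hGle
      _ ≤ (Fintype.card (Fin N → Bool)) * (c ^ n * Real.exp (-M)) :=
          mul_le_mul_of_nonneg_left key hcard
      _ ≤ F n := hFge
  refine ⟨hne, fun r => ⟨fun h => Nat.sInf_le h, fun h => ?_⟩⟩
  have hmem : sInf {r : ℕ | G r ≤ F r} ∈ {r : ℕ | G r ≤ F r} := Nat.sInf_mem hne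
  have hall : ∀ k : ℕ, G (sInf {r : ℕ | G r ≤ F r} + k) ≤ F (sInf {r : ℕ | G r ≤ F r} + k) := by
    intro k
    induction k with
    | zero => simpa using hmem
    | succ k ih => exact step _ ih
  have := hall (r - sInf {r : ℕ | G r ≤ F r})
  rwa [Nat.add_sub_cancel' h] at this
end
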